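/- Let j ≥ 0 be an integer and let w : ℝ² → ℝ be continuously differentiable. Suppose u₀ ∈ Q_j satisfies ∫_K (w − u₀) p dx dy = 0 for every p ∈ Q_j; suppose for each m ∈ {1,2,3,4} that u_{b,m} is a polynomial of degree ≤ j in the coordinate running along F_m with ∫_{F_m} (w − u_{b,m}) p ds = 0 for every univariate polynomial p of degree ≤ j; and suppose G ∈ RT_j(K) satisfies ∫_K G·q dx dy = −∫_K u₀ (div q) dx dy + Σ_{m=1}^{4} ∫_{F_m} u_{b,m} (q·n_m) ds for every q ∈ RT_j(K). Then G is the best L² approximation of ∇w from RT_j(K): for every q ∈ RT_j(K), ∫_K |G − ∇w|² dx dy ≤ ∫_K |q − ∇w|² dx dy. -/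

import Mathlib

open MeasureTheory MvPolynomial

noncomputable section

/-- Real polynomials in two variables. -/
abbrev Poly2 := MvPolynomial (Fin 2) ℝ

/-- Evaluate a two-variable polynomial at `(x, y)`. -/
def evalP (p : Poly2) (x y : ℝ) : ℝ := MvPolynomial.eval ![x, y] p

/-- `Q_{r,s}`: degree `≤ r` in the first variable and `≤ s` in the second. -/
def memQ (r s : ℕ) (p : Poly2) : Prop := p.degreeOf 0 ≤ r ∧ p.degreeOf 1 ≤ s

/-- The divergence of a polynomial vector field. -/
def divP (q : Poly2 × Poly2) : Poly2 := pderiv 0 q.1 + pderiv 1 q.2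

/-- The Raviart–Thomas space `RT_j(K) = Q_{j+1,j} × Q_{j,j+1}`. -/
def memRT (j : ℕ) (q : Poly2 × Poly2) : Prop := memQ (j+1) j q.1 ∧ memQ j (j+1) q.2

/-!
`G - ∇w` is `L²(K)`-orthogonal to `RT_j(K)`. Integrating by parts on `K`,
`(∇w, q)_K = -(w, div q)_K + ⟨w, q · n⟩_∂K`. For `q ∈ RT_j(K)`, `div q ∈ Q_j` and on each edge
`q · n` is a polynomial of degree `≤ j` in the edge variable, so in this identity `w` may be
replaced by its projections `u₀` and `u_{b,m}`; the right-hand side then becomes the one that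
defines `G`. Pythagoras in `L²(K)²` gives minimality.
-/

open Set

namespace MvPolynomial

variable {R σ : Type*} [CommSemiring R]

lemma degreeOf_pderiv_le (i k : σ) (p : MvPolynomial σ R) :
    (pderiv i p).degreeOf k ≤ p.degreeOf k - Finsupp.single i 1 k := by
  refine degreeOf_le_iff.2 fun m hm => ?_
  have hmem : m + Finsupp.single i 1 ∈ p.support := by
    rw [mem_support_iff, coeff_pderiv] at hm
    exact mem_support_iff.2 (left_ne_zero_of_mul hm)
  have := monomial_le_degreeOf k hmem
  rw [Finsupp.add_apply] at this
  omega

variable [DecidableEq σ]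

def restrictLine (i : σ) (v : σ → R) (p : MvPolynomial σ R) : Polynomial R :=
  aeval (Function.update (fun k => Polynomial.C (v k)) i Polynomial.X) p

lemma eval_restrictLine (i : σ) (v : σ → R) (p : MvPolynomial σ R) (t : R) :
    (restrictLine i v p).eval t = eval (Function.update v i t) p := by
  induction p using MvPolynomial.induction_on with
  | C a => simp [restrictLine]
  | add p q hp hq => simp_all [restrictLine]
  | mul_X p k hp =>
    rcases eq_or_ne k i with rfl | hk <;> simp_all [restrictLine, Function.update_of_ne]

lemma natDegree_restrictLine_le (i : σ) (v : σ → R) (p : MvPolynomial σ R) :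
    (restrictLine i v p).natDegree ≤ p.degreeOf i := by
  set g := Function.update (fun k => Polynomial.C (v k)) i Polynomial.X
  conv_lhs => rw [restrictLine, p.as_sum, map_sum]
  refine Polynomial.natDegree_sum_le_of_forall_le _ _ fun m hm => ?_
  rw [aeval_monomial, Finsupp.prod]
  calc _ ≤ (∏ k ∈ m.support, g k ^ m k).natDegree := Polynomial.natDegree_C_mul_le _ _
    _ ≤ ∑ k ∈ m.support, (g k ^ m k).natDegree := Polynomial.natDegree_prod_le _ _
    _ ≤ ∑ k ∈ m.support, if k = i then m k else 0 := by
        refine Finset.sum_le_sum fun k _ => ?_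
        rcases eq_or_ne k i with rfl | hk
        · simpa [g] using Polynomial.natDegree_X_pow_le (R := R) (m k)
        · rw [show g k = Polynomial.C (v k) from Function.update_of_ne hk _ _, ← Polynomial.C_pow,
            Polynomial.natDegree_C]
          exact Nat.zero_le _
    _ ≤ m i := by
        rw [Finset.sum_ite_eq']
        split_ifs <;> simp
    _ ≤ p.degreeOf i := monomial_le_degreeOf i hm

end MvPolynomial

lemma integral_gradient_mul_by_parts {x₀ x₁ y₀ y₁ : ℝ} (hx : x₀ ≤ x₁) (hy : y₀ ≤ y₁)
    {w f g : ℝ × ℝ → ℝ} (hw : ContDiff ℝ 1 w) (hf : ContDiff ℝ 1 f) (hg : ContDiff ℝ 1 g) :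
    ∫ z in Icc x₀ x₁ ×ˢ Icc y₀ y₁, (fderiv ℝ w z (1, 0) * f z + fderiv ℝ w z (0, 1) * g z)
      = -(∫ z in Icc x₀ x₁ ×ˢ Icc y₀ y₁, w z * (fderiv ℝ f z (1, 0) + fderiv ℝ g z (0, 1)))
        + ((∫ y in y₀..y₁, w (x₁, y) * f (x₁, y)) - (∫ y in y₀..y₁, w (x₀, y) * f (x₀, y))
          + (∫ x in x₀..x₁, w (x, y₁) * g (x, y₁)) - ∫ x in x₀..x₁, w (x, y₀) * g (x, y₀)) := by
  have hint {F : ℝ × ℝ → ℝ} (hF : Continuous F) : IntegrableOn F (Icc x₀ x₁ ×ˢ Icc y₀ y₁) :=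
    hF.continuousOn.integrableOn_compact (isCompact_Icc.prod isCompact_Icc)
  have hpartial {u : ℝ × ℝ → ℝ} (hu : ContDiff ℝ 1 u) (v : ℝ × ℝ) :
      Continuous fun z => fderiv ℝ u z v :=
    (hu.continuous_fderiv one_ne_zero).clm_apply continuous_const
  have hwf : ContDiff ℝ 1 fun z => w z * f z := hw.mul hf
  have hwg : ContDiff ℝ 1 fun z => w z * g z := hw.mul hg
  have hproduct : ∀ z, fderiv ℝ (fun z => w z * f z) z (1, 0)
      + fderiv ℝ (fun z => w z * g z) z (0, 1)
      = (fderiv ℝ w z (1, 0) * f z + fderiv ℝ w z (0, 1) * g z)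
        + w z * (fderiv ℝ f z (1, 0) + fderiv ℝ g z (0, 1)) := by
    intro z
    have hwz := hw.differentiable one_ne_zero z
    rw [fderiv_fun_mul hwz (hf.differentiable one_ne_zero z),
      fderiv_fun_mul hwz (hg.differentiable one_ne_zero z)]
    simp only [add_apply, smul_apply, smul_eq_mul]
    ring
  have hdiv := integral_divergence_prod_Icc_of_hasFDerivAt_of_le (fun z => w z * f z)
    (fun z => w z * g z) (fderiv ℝ fun z => w z * f z) (fderiv ℝ fun z => w z * g z)
    (x₀, y₀) (x₁, y₁) (Prod.mk_le_mk.2 ⟨hx, hy⟩) hwf.continuous.continuousOn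
    hwg.continuous.continuousOn
    (fun z _ => (hwf.differentiable one_ne_zero z).hasFDerivAt)
    (fun z _ => (hwg.differentiable one_ne_zero z).hasFDerivAt)
    (Icc_prod_Icc x₀ x₁ y₀ y₁ ▸ hint ((hpartial hwf _).add (hpartial hwg _)))
  simp only [hproduct, ← Icc_prod_Icc] at hdiv
  rw [integral_add
    (hint (((hpartial hw _).fun_mul hf.continuous).fun_add ((hpartial hw _).fun_mul hg.continuous)))
    (hint (hw.continuous.fun_mul ((hpartial hf _).fun_add (hpartial hg _))))] at hdiv
  linarith

lemma integral_mul_eq_of_integral_sub_mul_eq_zero {α : Type*} [MeasurableSpace α]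
    {μ : Measure α} {f g p : α → ℝ} (hf : Integrable (fun x => f x * p x) μ)
    (hg : Integrable (fun x => g x * p x) μ) (h : ∫ x, (f x - g x) * p x ∂μ = 0) :
    ∫ x, g x * p x ∂μ = ∫ x, f x * p x ∂μ := by
  rw [eq_comm, ← sub_eq_zero, ← integral_sub hf hg]
  simpa only [sub_mul] using h

lemma intervalIntegral_mul_eq_of_integral_sub_mul_eq_zero {a b : ℝ} {f g p : ℝ → ℝ}
    (hf : IntervalIntegrable (fun x => f x * p x) volume a b)
    (hg : IntervalIntegrable (fun x => g x * p x) volume a b)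
    (h : ∫ x in a..b, (f x - g x) * p x = 0) :
    ∫ x in a..b, g x * p x = ∫ x in a..b, f x * p x := by
  rw [eq_comm, ← sub_eq_zero, ← intervalIntegral.integral_sub hf hg]
  simpa only [sub_mul] using h

lemma setIntegral_sq_add_sq_le_of_orthogonal {X : Type*} [TopologicalSpace X] [T2Space X]
    [MeasurableSpace X] [OpensMeasurableSpace X] {μ : Measure X} [IsFiniteMeasureOnCompacts μ]
    {K : Set X} (hK : IsCompact K) {g₁ g₂ q₁ q₂ t₁ t₂ : X → ℝ} (hg₁ : Continuous g₁)
    (hg₂ : Continuous g₂) (hq₁ : Continuous q₁) (hq₂ : Continuous q₂) (ht₁ : Continuous t₁)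
    (ht₂ : Continuous t₂)
    (h : ∫ x in K, (g₁ x * (q₁ x - g₁ x) + g₂ x * (q₂ x - g₂ x)) ∂μ
      = ∫ x in K, (t₁ x * (q₁ x - g₁ x) + t₂ x * (q₂ x - g₂ x)) ∂μ) :
    ∫ x in K, ((g₁ x - t₁ x) ^ 2 + (g₂ x - t₂ x) ^ 2) ∂μ
      ≤ ∫ x in K, ((q₁ x - t₁ x) ^ 2 + (q₂ x - t₂ x) ^ 2) ∂μ := by
  have hint {F : X → ℝ} (hF : Continuous F) : IntegrableOn F K μ :=
    hF.continuousOn.integrableOn_compact hK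
  calc ∫ x in K, ((g₁ x - t₁ x) ^ 2 + (g₂ x - t₂ x) ^ 2) ∂μ
      ≤ ∫ x in K, ((g₁ x - t₁ x) ^ 2 + (g₂ x - t₂ x) ^ 2) ∂μ
        + 2 * ((∫ x in K, (g₁ x * (q₁ x - g₁ x) + g₂ x * (q₂ x - g₂ x)) ∂μ)
          - ∫ x in K, (t₁ x * (q₁ x - g₁ x) + t₂ x * (q₂ x - g₂ x)) ∂μ)
        + ∫ x in K, ((q₁ x - g₁ x) ^ 2 + (q₂ x - g₂ x) ^ 2) ∂μ := by
        rw [h, sub_self, mul_zero, add_zero]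
        exact le_add_of_nonneg_right (integral_nonneg fun x => by positivity)
    _ = ∫ x in K, ((q₁ x - t₁ x) ^ 2 + (q₂ x - t₂ x) ^ 2) ∂μ := by
        rw [← integral_sub (hint (by fun_prop)) (hint (by fun_prop)), ← integral_const_mul,
          ← integral_add (hint (by fun_prop)) (hint (by fun_prop)),
          ← integral_add (hint (by fun_prop)) (hint (by fun_prop))]
        congr 1 with x
        ring

lemma memQ_sub {r s : ℕ} {p q : Poly2} (hp : memQ r s p) (hq : memQ r s q) :
    memQ r s (p - q) :=
  ⟨(degreeOf_sub_le 0 p q).trans (max_le hp.1 hq.1),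
    (degreeOf_sub_le 1 p q).trans (max_le hp.2 hq.2)⟩

lemma memRT_sub {j : ℕ} {p q : Poly2 × Poly2} (hp : memRT j p) (hq : memRT j q) :
    memRT j (p.1 - q.1, p.2 - q.2) :=
  ⟨memQ_sub hp.1 hq.1, memQ_sub hp.2 hq.2⟩

lemma memQ_divP {j : ℕ} {q : Poly2 × Poly2} (hq : memRT j q) : memQ j j (divP q) := by
  have h₀₀ := degreeOf_pderiv_le 0 0 q.1
  have h₁₀ := degreeOf_pderiv_le 1 0 q.2
  have h₀₁ := degreeOf_pderiv_le 0 1 q.1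
  have h₁₁ := degreeOf_pderiv_le 1 1 q.2
  simp only [Finsupp.single_eq_same, ne_eq, zero_ne_one, one_ne_zero, not_false_eq_true,
    Finsupp.single_eq_of_ne] at h₀₀ h₁₀ h₀₁ h₁₁
  obtain ⟨⟨h1, h2⟩, h3, h4⟩ := hq
  exact ⟨(degreeOf_add_le _ _ _).trans (max_le (by omega) (by omega)),
    (degreeOf_add_le _ _ _).trans (max_le (by omega) (by omega))⟩

lemma eval_restrictLine_one (p : Poly2) (x y : ℝ) :
    (restrictLine 1 ![x, 0] p).eval y = evalP p x y := by
  rw [eval_restrictLine, evalP, show Function.update ![x, 0] 1 y = ![x, y] by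
    funext k; fin_cases k <;> simp]

lemma eval_restrictLine_zero (p : Poly2) (x y : ℝ) :
    (restrictLine 0 ![0, y] p).eval x = evalP p x y := by
  rw [eval_restrictLine, evalP, show Function.update ![0, y] 0 x = ![x, y] by
    funext k; fin_cases k <;> simp]

lemma contDiff_evalP {n : WithTop ℕ∞} (p : Poly2) :
    ContDiff ℝ n fun z : ℝ × ℝ => evalP p z.1 z.2 := by
  induction p using MvPolynomial.induction_on with
  | C a => simpa [evalP] using contDiff_const
  | add p q hp hq => simpa [evalP] using hp.add hq
  | mul_X p i hp =>
    fin_cases i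
    · simpa [evalP] using hp.mul contDiff_fst
    · simpa [evalP] using hp.mul contDiff_snd

lemma continuous_evalP (p : Poly2) : Continuous fun z : ℝ × ℝ => evalP p z.1 z.2 :=
  (contDiff_evalP (n := 0) p).continuous

lemma hasFDerivAt_evalP (p : Poly2) (z : ℝ × ℝ) :
    HasFDerivAt (fun z : ℝ × ℝ => evalP p z.1 z.2)
      (evalP (pderiv 0 p) z.1 z.2 • ContinuousLinearMap.fst ℝ ℝ ℝ
        + evalP (pderiv 1 p) z.1 z.2 • ContinuousLinearMap.snd ℝ ℝ ℝ) z := by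
  induction p using MvPolynomial.induction_on with
  | C a => simpa [evalP] using hasFDerivAt_const a z
  | add p q hp hq =>
    refine ((hp.add hq).congr_fderiv ?_).congr_of_eventuallyEq
      (Filter.Eventually.of_forall fun z => by simp [evalP])
    simp only [map_add, evalP, add_smul]; abel
  | mul_X p i hp =>
    fin_cases i
    · refine ((hp.mul (hasFDerivAt_fst (p := z))).congr_fderiv ?_).congr_of_eventuallyEq
        (Filter.Eventually.of_forall fun z => by simp [evalP])
      ext <;> simp [evalP]
    · refine ((hp.mul (hasFDerivAt_snd (p := z))).congr_fderiv ?_).congr_of_eventuallyEq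
        (Filter.Eventually.of_forall fun z => by simp [evalP])
      ext <;> simp [evalP]

lemma fderiv_evalP_apply_fst (p : Poly2) (z : ℝ × ℝ) :
    fderiv ℝ (fun z : ℝ × ℝ => evalP p z.1 z.2) z (1, 0) = evalP (pderiv 0 p) z.1 z.2 := by
  simp [(hasFDerivAt_evalP p z).fderiv]

lemma fderiv_evalP_apply_snd (p : Poly2) (z : ℝ × ℝ) :
    fderiv ℝ (fun z : ℝ × ℝ => evalP p z.1 z.2) z (0, 1) = evalP (pderiv 1 p) z.1 z.2 := by
  simp [(hasFDerivAt_evalP p z).fderiv]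

/-- `-(u, div q)_K + ⟨u_b, q · n⟩_∂K`, where `u₁, …, u₄` are the values of `u_b` on the edges
`F₁, …, F₄`; the discrete weak gradient of `(u, u_b)` is the element of `RT_j(K)` representing
this functional. -/
def weakGradPairing (x₀ x₁ y₀ y₁ : ℝ) (u : ℝ × ℝ → ℝ) (u₁ u₂ u₃ u₄ : ℝ → ℝ)
    (q : Poly2 × Poly2) : ℝ :=
  -(∫ z in Icc x₀ x₁ ×ˢ Icc y₀ y₁, u z * evalP (divP q) z.1 z.2)
    + ((∫ y in y₀..y₁, u₁ y * (-(evalP q.1 x₀ y))) + (∫ y in y₀..y₁, u₂ y * evalP q.1 x₁ y)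
      + (∫ x in x₀..x₁, u₃ x * (-(evalP q.2 x y₀))) + (∫ x in x₀..x₁, u₄ x * evalP q.2 x y₁))

lemma integral_fderiv_mul_evalP_eq_weakGradPairing {x₀ x₁ y₀ y₁ : ℝ} (hx : x₀ ≤ x₁)
    (hy : y₀ ≤ y₁) {w : ℝ × ℝ → ℝ} (hw : ContDiff ℝ 1 w) (q : Poly2 × Poly2) :
    ∫ z in Icc x₀ x₁ ×ˢ Icc y₀ y₁,
        (fderiv ℝ w z (1, 0) * evalP q.1 z.1 z.2 + fderiv ℝ w z (0, 1) * evalP q.2 z.1 z.2)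
      = weakGradPairing x₀ x₁ y₀ y₁ w (fun y => w (x₀, y)) (fun y => w (x₁, y))
          (fun x => w (x, y₀)) (fun x => w (x, y₁)) q := by
  rw [integral_gradient_mul_by_parts hx hy hw (contDiff_evalP q.1) (contDiff_evalP q.2)]
  simp only [weakGradPairing, fderiv_evalP_apply_fst, fderiv_evalP_apply_snd, mul_neg,
    intervalIntegral.integral_neg]
  simp only [divP, evalP, map_add]
  ring

lemma weakGradPairing_eq_of_orthogonal {j : ℕ} {x₀ x₁ y₀ y₁ : ℝ} {w : ℝ × ℝ → ℝ}
    (hw : Continuous w) {u₀ : Poly2} {ub₁ ub₂ ub₃ ub₄ : Polynomial ℝ}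
    (hu₀ : ∀ p : Poly2, memQ j j p →
      (∫ z in Icc x₀ x₁ ×ˢ Icc y₀ y₁, (w z - evalP u₀ z.1 z.2) * evalP p z.1 z.2) = 0)
    (hub₁ : ∀ p : Polynomial ℝ, p.natDegree ≤ j →
      (∫ y in y₀..y₁, (w (x₀, y) - ub₁.eval y) * p.eval y) = 0)
    (hub₂ : ∀ p : Polynomial ℝ, p.natDegree ≤ j →
      (∫ y in y₀..y₁, (w (x₁, y) - ub₂.eval y) * p.eval y) = 0)
    (hub₃ : ∀ p : Polynomial ℝ, p.natDegree ≤ j →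
      (∫ x in x₀..x₁, (w (x, y₀) - ub₃.eval x) * p.eval x) = 0)
    (hub₄ : ∀ p : Polynomial ℝ, p.natDegree ≤ j →
      (∫ x in x₀..x₁, (w (x, y₁) - ub₄.eval x) * p.eval x) = 0)
    {q : Poly2 × Poly2} (hq : memRT j q) :
    weakGradPairing x₀ x₁ y₀ y₁ (fun z => evalP u₀ z.1 z.2) (fun y => ub₁.eval y)
        (fun y => ub₂.eval y) (fun x => ub₃.eval x) (fun x => ub₄.eval x) q
      = weakGradPairing x₀ x₁ y₀ y₁ w (fun y => w (x₀, y)) (fun y => w (x₁, y))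
          (fun x => w (x, y₀)) (fun x => w (x, y₁)) q := by
  have hint {F : ℝ × ℝ → ℝ} (hF : Continuous F) : IntegrableOn F (Icc x₀ x₁ ×ˢ Icc y₀ y₁) :=
    hF.continuousOn.integrableOn_compact (isCompact_Icc.prod isCompact_Icc)
  have hinterior := integral_mul_eq_of_integral_sub_mul_eq_zero
    (hint (hw.mul (continuous_evalP (divP q))))
    (hint ((continuous_evalP u₀).mul (continuous_evalP (divP q))))
    (hu₀ _ (memQ_divP hq))
  have hedge {a b : ℝ} {v : ℝ → ℝ} (hv : Continuous v) {u : Polynomial ℝ}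
      (hu : ∀ p : Polynomial ℝ, p.natDegree ≤ j → ∫ t in a..b, (v t - u.eval t) * p.eval t = 0)
      (p : Polynomial ℝ) (hp : p.natDegree ≤ j) :
      ∫ t in a..b, u.eval t * p.eval t = ∫ t in a..b, v t * p.eval t :=
    intervalIntegral_mul_eq_of_integral_sub_mul_eq_zero
      ((hv.mul p.continuous).intervalIntegrable _ _)
      ((u.continuous.mul p.continuous).intervalIntegrable _ _) (hu p hp)
  have hvert (c : ℝ) : Continuous fun y => w (c, y) :=
    hw.comp (continuous_const.prodMk continuous_id)
  have hhor (c : ℝ) : Continuous fun x => w (x, c) :=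
    hw.comp (continuous_id.prodMk continuous_const)
  have h₁ := hedge (hvert x₀) hub₁
    (restrictLine 1 ![x₀, 0] q.1) ((natDegree_restrictLine_le _ _ _).trans hq.1.2)
  have h₂ := hedge (hvert x₁) hub₂
    (restrictLine 1 ![x₁, 0] q.1) ((natDegree_restrictLine_le _ _ _).trans hq.1.2)
  have h₃ := hedge (hhor y₀) hub₃
    (restrictLine 0 ![0, y₀] q.2) ((natDegree_restrictLine_le _ _ _).trans hq.2.1)
  have h₄ := hedge (hhor y₁) hub₄
    (restrictLine 0 ![0, y₁] q.2) ((natDegree_restrictLine_le _ _ _).trans hq.2.1)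
  simp only [eval_restrictLine_one, eval_restrictLine_zero] at h₁ h₂ h₃ h₄
  simp only [weakGradPairing, mul_neg, intervalIntegral.integral_neg]
  rw [hinterior, h₁, h₂, h₃, h₄]

theorem statement4_general (j : ℕ) (x₀ x₁ y₀ y₁ : ℝ) (hx : x₀ < x₁) (hy : y₀ < y₁)
    (w : ℝ × ℝ → ℝ) (hw : ContDiff ℝ 1 w)
    (u₀ : Poly2)
    (hu₀proj : ∀ p : Poly2, memQ j j p →
      (∫ z in Set.Icc x₀ x₁ ×ˢ Set.Icc y₀ y₁, (w z - evalP u₀ z.1 z.2) * evalP p z.1 z.2) = 0)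
    (ub₁ ub₂ ub₃ ub₄ : Polynomial ℝ)
    (hub₁ : ∀ p : Polynomial ℝ, p.natDegree ≤ j →
      (∫ y in y₀..y₁, (w (x₀, y) - ub₁.eval y) * p.eval y) = 0)
    (hub₂ : ∀ p : Polynomial ℝ, p.natDegree ≤ j →
      (∫ y in y₀..y₁, (w (x₁, y) - ub₂.eval y) * p.eval y) = 0)
    (hub₃ : ∀ p : Polynomial ℝ, p.natDegree ≤ j →
      (∫ x in x₀..x₁, (w (x, y₀) - ub₃.eval x) * p.eval x) = 0)
    (hub₄ : ∀ p : Polynomial ℝ, p.natDegree ≤ j →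
      (∫ x in x₀..x₁, (w (x, y₁) - ub₄.eval x) * p.eval x) = 0)
    (G : Poly2 × Poly2) (hG : memRT j G)
    (hGdef : ∀ q : Poly2 × Poly2, memRT j q →
      (∫ z in Set.Icc x₀ x₁ ×ˢ Set.Icc y₀ y₁,
        (evalP G.1 z.1 z.2 * evalP q.1 z.1 z.2 + evalP G.2 z.1 z.2 * evalP q.2 z.1 z.2))
      = -(∫ z in Set.Icc x₀ x₁ ×ˢ Set.Icc y₀ y₁, evalP u₀ z.1 z.2 * evalP (divP q) z.1 z.2)
        + ((∫ y in y₀..y₁, ub₁.eval y * (-(evalP q.1 x₀ y)))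
          + (∫ y in y₀..y₁, ub₂.eval y * evalP q.1 x₁ y)
          + (∫ x in x₀..x₁, ub₃.eval x * (-(evalP q.2 x y₀)))
          + (∫ x in x₀..x₁, ub₄.eval x * evalP q.2 x y₁))) :
    ∀ q : Poly2 × Poly2, memRT j q →
      (∫ z in Set.Icc x₀ x₁ ×ˢ Set.Icc y₀ y₁,
        ((evalP G.1 z.1 z.2 - fderiv ℝ w z (1, 0)) ^ 2
          + (evalP G.2 z.1 z.2 - fderiv ℝ w z (0, 1)) ^ 2))
      ≤ ∫ z in Set.Icc x₀ x₁ ×ˢ Set.Icc y₀ y₁,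
        ((evalP q.1 z.1 z.2 - fderiv ℝ w z (1, 0)) ^ 2
          + (evalP q.2 z.1 z.2 - fderiv ℝ w z (0, 1)) ^ 2) := by
  intro q hq
  have hr := memRT_sub hq hG
  have hGr := (hGdef _ hr).trans
    ((weakGradPairing_eq_of_orthogonal hw.continuous hu₀proj hub₁ hub₂ hub₃ hub₄ hr).trans
      (integral_fderiv_mul_evalP_eq_weakGradPairing hx.le hy.le hw _).symm)
  have hpartial (v : ℝ × ℝ) : Continuous fun z => fderiv ℝ w z v :=
    (hw.continuous_fderiv one_ne_zero).clm_apply continuous_const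
  refine setIntegral_sq_add_sq_le_of_orthogonal (isCompact_Icc.prod isCompact_Icc)
    (continuous_evalP G.1) (continuous_evalP G.2) (continuous_evalP q.1) (continuous_evalP q.2)
    (hpartial _) (hpartial _) ?_
  simpa only [evalP, map_sub] using hGr

/-- If `u₀` is the `L²(K)`-projection of `w` onto `Q_j`, each `u_{b,m}` is the
`L²(F_m)`-projection of `w` onto polynomials of degree `≤ j` on the edge `F_m`, and
`G ∈ RT_j(K)` is the associated discrete weak gradient, then `G` is the best `L²(K)` approximation of
`∇w` from `RT_j(K)`. -/
theorem statement4 (j : ℕ) (x₀ x₁ y₀ y₁ : ℝ) (hx : x₀ < x₁) (hy : y₀ < y₁)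
    (w : ℝ × ℝ → ℝ) (hw : ContDiff ℝ 1 w)
    (u₀ : Poly2) (hu₀ : memQ j j u₀)
    (hu₀proj : ∀ p : Poly2, memQ j j p →
      (∫ z in Set.Icc x₀ x₁ ×ˢ Set.Icc y₀ y₁, (w z - evalP u₀ z.1 z.2) * evalP p z.1 z.2) = 0)
    (ub₁ ub₂ ub₃ ub₄ : Polynomial ℝ)
    (hb₁ : ub₁.natDegree ≤ j) (hb₂ : ub₂.natDegree ≤ j)
    (hb₃ : ub₃.natDegree ≤ j) (hb₄ : ub₄.natDegree ≤ j)
    (hub₁ : ∀ p : Polynomial ℝ, p.natDegree ≤ j →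
      (∫ y in y₀..y₁, (w (x₀, y) - ub₁.eval y) * p.eval y) = 0)
    (hub₂ : ∀ p : Polynomial ℝ, p.natDegree ≤ j →
      (∫ y in y₀..y₁, (w (x₁, y) - ub₂.eval y) * p.eval y) = 0)
    (hub₃ : ∀ p : Polynomial ℝ, p.natDegree ≤ j →
      (∫ x in x₀..x₁, (w (x, y₀) - ub₃.eval x) * p.eval x) = 0)
    (hub₄ : ∀ p : Polynomial ℝ, p.natDegree ≤ j →
      (∫ x in x₀..x₁, (w (x, y₁) - ub₄.eval x) * p.eval x) = 0)
    (G : Poly2 × Poly2) (hG : memRT j G)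
    (hGdef : ∀ q : Poly2 × Poly2, memRT j q →
      (∫ z in Set.Icc x₀ x₁ ×ˢ Set.Icc y₀ y₁,
        (evalP G.1 z.1 z.2 * evalP q.1 z.1 z.2 + evalP G.2 z.1 z.2 * evalP q.2 z.1 z.2))
      = -(∫ z in Set.Icc x₀ x₁ ×ˢ Set.Icc y₀ y₁, evalP u₀ z.1 z.2 * evalP (divP q) z.1 z.2)
        + ((∫ y in y₀..y₁, ub₁.eval y * (-(evalP q.1 x₀ y)))
          + (∫ y in y₀..y₁, ub₂.eval y * evalP q.1 x₁ y)
          + (∫ x in x₀..x₁, ub₃.eval x * (-(evalP q.2 x y₀)))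
          + (∫ x in x₀..x₁, ub₄.eval x * evalP q.2 x y₁))) :
    ∀ q : Poly2 × Poly2, memRT j q →
      (∫ z in Set.Icc x₀ x₁ ×ˢ Set.Icc y₀ y₁,
        ((evalP G.1 z.1 z.2 - fderiv ℝ w z (1, 0)) ^ 2
          + (evalP G.2 z.1 z.2 - fderiv ℝ w z (0, 1)) ^ 2))
      ≤ ∫ z in Set.Icc x₀ x₁ ×ˢ Set.Icc y₀ y₁,
        ((evalP q.1 z.1 z.2 - fderiv ℝ w z (1, 0)) ^ 2
          + (evalP q.2 z.1 z.2 - fderiv ℝ w z (0, 1)) ^ 2) :=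
  statement4_general j x₀ x₁ y₀ y₁ hx hy w hw u₀ hu₀proj ub₁ ub₂ ub₃ ub₄ hub₁ hub₂ hub₃ hub₄ G hG
    hGdef
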